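/- Suppose V and R satisfy the (P,p,T,t,1)-quadratic Lyapunov inequality with P = 0, p = 0, t = 𝟏 (the all-ones vector in ℝ^m) and T = [C, D, −D; 0, 0, I]ᵀ[0, −½I; −½I, 0][C, D, −D; 0, 0, I] ∈ S^{n+2m}. Let f_i ∈ F_{σ_i,β_i}(H) (i = 1,…,m), let {ξ_k = (x_k,u_k,y_k,F_k)}_{k≥0} be any trajectory of the algorithm (ξ_0 algorithm-consistent, ξ_{k+1} a successor of ξ_k), and let ξ⋆ = (x⋆,u⋆,y⋆,F⋆) be a fixed point satisfying y⋆_1 = … = y⋆_m =: y⋆ and Σ_{i=1}^m u⋆_i = 0. Then, with the Lagrangian L(𝐲,𝐮) = Σ_{i=1}^m f_i(y_i) + Σ_{i=1}^m ⟨u_i, y_m − y_i⟩: (a) for every k, Q(T,(x_k−x⋆,u_k,u⋆)) + tᵀ(F_k−F⋆) = L(y_k,u⋆) − L(y⋆,u_k) = Σ_{i=1}^m ( f_i((y_k)_i) − f_i(y⋆) − ⟨u⋆_i, (y_k)_i⟩ ) ≥ 0; and (b) for every k ≥ 0 the ergodic duality gap satisfies L((1/(k+1))Σ_{j=0}^k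 y_j, u⋆) − L((y⋆,…,y⋆), (1/(k+1))Σ_{j=0}^k u_j) ≤ V(ξ_0,ξ⋆)/(k+1). -/

import Mathlib

open scoped ENNReal
open Matrix

/-- `u` is a subgradient of `f` at `x`: `f z ≥ f x + ⟨u, z - x⟩` for all `z`. -/
def IsSubgradientAt {H : Type*} [NormedAddCommGroup H] [InnerProductSpace ℝ H]
    (f : H → ℝ) (u x : H) : Prop :=
  ∀ z : H, f x + (inner ℝ u (z - x) : ℝ) ≤ f z

/-- `f` is `σ`-strongly convex: `f - (σ/2)‖·‖²` is convex. -/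
def StronglyConvex {H : Type*} [NormedAddCommGroup H] [InnerProductSpace ℝ H]
    (σ : ℝ) (f : H → ℝ) : Prop :=
  ConvexOn ℝ Set.univ (fun x => f x - σ / 2 * ‖x‖ ^ 2)

/-- `f` is `β`-smooth: differentiable with `β`-Lipschitz gradient. -/
def IsSmoothWith {H : Type*} [NormedAddCommGroup H] [InnerProductSpace ℝ H]
    [CompleteSpace H] (β : ℝ) (f : H → ℝ) : Prop :=
  Differentiable ℝ f ∧ ∀ x y : H, ‖gradient f x - gradient f y‖ ≤ β * ‖x - y‖

/-- Membership in the function class `F_{σ,β}(H)`. -/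
def MemFClass {H : Type*} [NormedAddCommGroup H] [InnerProductSpace ℝ H]
    [CompleteSpace H] (σ : ℝ) (β : ℝ≥0∞) (f : H → ℝ) : Prop :=
  StronglyConvex σ f ∧ (β ≠ ⊤ → IsSmoothWith β.toReal f) ∧
    (β = ⊤ → LowerSemicontinuous f)

/-- `(M ⊗ Id) z` for a real matrix `M` acting on tuples of Hilbert-space vectors. -/
def matVecH {H : Type*} [AddCommGroup H] [Module ℝ H] {p q : Type*} [Fintype q]
    (M : Matrix p q ℝ) (z : q → H) : p → H :=
  fun i => ∑ j, M i j • z j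

/-- The point `(x, u, y, F)` is algorithm-consistent for `f`. -/
def AlgConsistent {H : Type*} [NormedAddCommGroup H] [InnerProductSpace ℝ H]
    {n m : ℕ} (C : Matrix (Fin m) (Fin n) ℝ) (D : Matrix (Fin m) (Fin m) ℝ)
    (f : Fin m → H → ℝ) (x : Fin n → H) (u y : Fin m → H) (F : Fin m → ℝ) : Prop :=
  y = matVecH C x + matVecH D u ∧ (∀ i, IsSubgradientAt (f i) (u i) (y i)) ∧
    ∀ i, F i = f i (y i)

/-- `(x, u, y, F)` is a fixed point of the algorithm. -/
def IsFixedPoint {H : Type*} [NormedAddCommGroup H] [InnerProductSpace ℝ H]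
    {n m : ℕ} (A : Matrix (Fin n) (Fin n) ℝ) (B : Matrix (Fin n) (Fin m) ℝ)
    (C : Matrix (Fin m) (Fin n) ℝ) (D : Matrix (Fin m) (Fin m) ℝ)
    (f : Fin m → H → ℝ) (x : Fin n → H) (u y : Fin m → H) (F : Fin m → ℝ) : Prop :=
  x = matVecH A x + matVecH B u ∧ AlgConsistent C D f x u y F

/-- `(xp, up, yp, Fp)` is a successor of an algorithm-consistent point with data `(x, u)`. -/
def IsSuccessor {H : Type*} [NormedAddCommGroup H] [InnerProductSpace ℝ H]
    {n m : ℕ} (A : Matrix (Fin n) (Fin n) ℝ) (B : Matrix (Fin n) (Fin m) ℝ)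
    (C : Matrix (Fin m) (Fin n) ℝ) (D : Matrix (Fin m) (Fin m) ℝ)
    (f : Fin m → H → ℝ) (x : Fin n → H) (u : Fin m → H)
    (xp : Fin n → H) (up yp : Fin m → H) (Fp : Fin m → ℝ) : Prop :=
  xp = matVecH A x + matVecH B u ∧ AlgConsistent C D f xp up yp Fp

/-- The matrix `N = [I_{m−1}; −𝟏ᵀ] ∈ ℝ^{m×(m−1)}`. -/
def Nmat (m : ℕ) : Matrix (Fin m) (Fin (m - 1)) ℝ :=
  Matrix.of fun i j => if (i : ℕ) = (j : ℕ) then 1 else if (i : ℕ) = m - 1 then -1 else 0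

/-- Assumption 1: the range and null-space conditions on `(A, B, C, D)`. -/
def Assumption1 {n m : ℕ} (A : Matrix (Fin n) (Fin n) ℝ) (B : Matrix (Fin n) (Fin m) ℝ)
    (C : Matrix (Fin m) (Fin n) ℝ) (D : Matrix (Fin m) (Fin m) ℝ) : Prop :=
  LinearMap.range (Matrix.fromBlocks (B * Nmat m) 0 (D * Nmat m)
      (Matrix.of fun (_ : Fin m) (_ : Fin 1) => (-1 : ℝ))).mulVecLin ≤
    LinearMap.range (Matrix.fromRows (1 - A) (-C)).mulVecLin ∧
  LinearMap.ker (Matrix.fromCols (1 - A) (-B)).mulVecLin ≤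
    LinearMap.ker (Matrix.fromBlocks ((Nmat m)ᵀ * C) ((Nmat m)ᵀ * D) 0
      (Matrix.of fun (_ : Fin 1) (_ : Fin m) => (1 : ℝ))).mulVecLin

/-- Assumption 2: `D` lower triangular with nonpositive diagonal, and for each `i`
either `β_i < +∞` or `D_{ii} < 0`. -/
def Assumption2 {m : ℕ} (β : Fin m → ℝ≥0∞) (D : Matrix (Fin m) (Fin m) ℝ) : Prop :=
  (∀ i j : Fin m, (i : ℕ) < (j : ℕ) → D i j = 0) ∧ (∀ i, D i i ≤ 0) ∧
    ∀ i, β i ≠ ⊤ ∨ D i i < 0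

/-- Sum inner product quadratic form `Q(M, z) = ⟨z, (M ⊗ Id) z⟩` on `H^ι`. -/
noncomputable def quadFormH {H : Type*} [NormedAddCommGroup H] [InnerProductSpace ℝ H]
    {ι : Type*} [Fintype ι] (M : Matrix ι ι ℝ) (z : ι → H) : ℝ :=
  ∑ i, ∑ j, M i j * (inner ℝ (z i) (z j) : ℝ)

/-- The index set of `ℝ^{n+2m}`, split as `n + m + m`. -/
abbrev StIdx (n m : ℕ) := Fin n ⊕ (Fin m ⊕ Fin m)

/-- The index set of `ℝ^{n+3m-1}`, split as `n + m + m + (m-1)`. -/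
abbrev ColIdx (n m : ℕ) := Fin n ⊕ (Fin m ⊕ (Fin m ⊕ Fin (m - 1)))

/-- The index set of `ℝ^{2m}`. -/
abbrev TwoM (m : ℕ) := Fin m ⊕ Fin m

/-- The index set of `ℝ^{3m}`. -/
abbrev ThreeM (m : ℕ) := Fin 3 × Fin m

/-- The tuple `(x, u, v) ∈ H^{n+2m}`. -/
def tripleH {H : Type*} {n m : ℕ} (x : Fin n → H) (u v : Fin m → H) : StIdx n m → H :=
  Sum.elim x (Sum.elim u v)

/-- The value `Q(Q,(x−x⋆,u,u⋆)) + qᵀ(F−F⋆)` of a quadratic ansatz. -/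
noncomputable def Vval {H : Type*} [NormedAddCommGroup H] [InnerProductSpace ℝ H]
    {n m : ℕ} (Q : Matrix (StIdx n m) (StIdx n m) ℝ) (q : Fin m → ℝ)
    (x : Fin n → H) (u : Fin m → H) (F : Fin m → ℝ)
    (xs : Fin n → H) (us : Fin m → H) (Fs : Fin m → ℝ) : ℝ :=
  quadFormH Q (tripleH (x - xs) u us) + ∑ i, q i * (F i - Fs i)

/-- `V` and `R` (given by `(Q,q)` and `(S,s)`) satisfy the `(P,p,T,t,ρ)`-quadratic
Lyapunov inequality for the algorithm `(A,B,C,D)` over the class determined by `σ, β`. -/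
def QuadLyap {H : Type*} [NormedAddCommGroup H] [InnerProductSpace ℝ H] [CompleteSpace H]
    {n m : ℕ}
    (A : Matrix (Fin n) (Fin n) ℝ) (B : Matrix (Fin n) (Fin m) ℝ)
    (C : Matrix (Fin m) (Fin n) ℝ) (D : Matrix (Fin m) (Fin m) ℝ)
    (σ : Fin m → ℝ) (β : Fin m → ℝ≥0∞)
    (Q S P T : Matrix (StIdx n m) (StIdx n m) ℝ) (q s p t : Fin m → ℝ) (ρ : ℝ) : Prop :=
  -- C1
  (∀ f : Fin m → H → ℝ, (∀ i, MemFClass (σ i) (β i) (f i)) →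
    ∀ x u y F, AlgConsistent C D f x u y F →
    ∀ xp up yp Fp, IsSuccessor A B C D f x u xp up yp Fp →
    ∀ xs us ys Fs, IsFixedPoint A B C D f xs us ys Fs →
      Vval Q q xp up Fp xs us Fs ≤ ρ * Vval Q q x u F xs us Fs - Vval S s x u F xs us Fs) ∧
  -- C2
  (∀ f : Fin m → H → ℝ, (∀ i, MemFClass (σ i) (β i) (f i)) →
    ∀ x u y F, AlgConsistent C D f x u y F →
    ∀ xs us ys Fs, IsFixedPoint A B C D f xs us ys Fs →
      Vval P p x u F xs us Fs ≤ Vval Q q x u F xs us Fs ∧ 0 ≤ Vval P p x u F xs us Fs) ∧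
  -- C3
  (∀ f : Fin m → H → ℝ, (∀ i, MemFClass (σ i) (β i) (f i)) →
    ∀ x u y F, AlgConsistent C D f x u y F →
    ∀ xs us ys Fs, IsFixedPoint A B C D f xs us ys Fs →
      Vval T t x u F xs us Fs ≤ Vval S s x u F xs us Fs ∧ 0 ≤ Vval T t x u F xs us Fs)

/-- Labels `∅`, `+`, `⋆` for points entering the interpolation inequalities. -/
inductive Lbl
  | o : Lbl
  | pl : Lbl
  | st : Lbl
deriving DecidableEq

instance : Fintype Lbl := ⟨{Lbl.o, Lbl.pl, Lbl.st}, by intro x; cases x <;> decide⟩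

/-- A row of four column blocks of sizes `n, m, m, m-1`. -/
def rb4 {n m : ℕ} {r : Type*} (M1 : Matrix r (Fin n) ℝ) (M2 M3 : Matrix r (Fin m) ℝ)
    (M4 : Matrix r (Fin (m - 1)) ℝ) : Matrix r (ColIdx n m) ℝ :=
  Matrix.of fun i => Sum.elim (M1 i) (Sum.elim (M2 i) (Sum.elim (M3 i) (M4 i)))

/-- Stack three `m`-row blocks into a `3m`-row matrix. -/
def stack3 {n m : ℕ} (R1 R2 R3 : Matrix (Fin m) (ColIdx n m) ℝ) :
    Matrix (ThreeM m) (ColIdx n m) ℝ :=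
  Matrix.of fun p => (![R1, R2, R3] p.1) p.2

/-- The matrices `E_{i,j} ∈ ℝ^{3m×(n+3m−1)}` (zero for `i = j`). -/
def Emat {n m : ℕ} (A : Matrix (Fin n) (Fin n) ℝ) (B : Matrix (Fin n) (Fin m) ℝ)
    (C : Matrix (Fin m) (Fin n) ℝ) (D : Matrix (Fin m) (Fin m) ℝ) :
    Lbl → Lbl → Matrix (ThreeM m) (ColIdx n m) ℝ
  | .o, .pl => stack3 (rb4 (C * (1 - A)) (D - C * B) (-D) (C * B * Nmat m))
      (rb4 0 1 0 0) (rb4 0 0 1 0)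
  | .pl, .o => stack3 (rb4 (C * (A - 1)) (C * B - D) D (-(C * B * Nmat m)))
      (rb4 0 0 1 0) (rb4 0 1 0 0)
  | .o, .st => stack3 (rb4 C D 0 (-(D * Nmat m))) (rb4 0 1 0 0) (rb4 0 0 0 (Nmat m))
  | .st, .o => stack3 (rb4 (-C) (-D) 0 (D * Nmat m)) (rb4 0 0 0 (Nmat m)) (rb4 0 1 0 0)
  | .pl, .st => stack3 (rb4 (C * A) (C * B) D (-(D * Nmat m) - C * B * Nmat m))
      (rb4 0 0 1 0) (rb4 0 0 0 (Nmat m))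
  | .st, .pl => stack3 (rb4 (-(C * A)) (-(C * B)) (-D) (D * Nmat m + C * B * Nmat m))
      (rb4 0 0 0 (Nmat m)) (rb4 0 0 1 0)
  | _, _ => 0

/-- The matrices `H_{i,j} ∈ ℝ^{m×2m}` (zero for `i = j`). -/
def Hmat (m : ℕ) : Lbl → Lbl → Matrix (Fin m) (TwoM m) ℝ
  | .o, .pl => Matrix.fromCols 1 (-1)
  | .pl, .o => Matrix.fromCols (-1) 1
  | .o, .st => Matrix.fromCols 1 0
  | .st, .o => Matrix.fromCols (-1) 0
  | .pl, .st => Matrix.fromCols 0 1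
  | .st, .pl => Matrix.fromCols 0 (-1)
  | _, _ => 0

/-- The vector `a_l = −e_l ∈ ℝ^m`. -/
def aVec {m : ℕ} (l : Fin m) : Fin m → ℝ := -(Pi.single l 1)

/-- The interpolation matrices `M_l ∈ S^{3m}`. -/
noncomputable def Mmat {m : ℕ} (σ : Fin m → ℝ) (β : Fin m → ℝ≥0∞) (l : Fin m) :
    Matrix (ThreeM m) (ThreeM m) ℝ :=
  if β l = ⊤ then
    Matrix.kronecker ((1 / 2 : ℝ) • !![σ l, 0, 1; 0, 0, 0; 1, 0, 0])
      (Matrix.diagonal (Pi.single l 1))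
  else
    Matrix.kronecker
      ((1 / (2 * ((β l).toReal - σ l))) •
        !![(β l).toReal * σ l, -σ l, (β l).toReal;
           -σ l, 1, -1;
           (β l).toReal, -1, 1])
      (Matrix.diagonal (Pi.single l 1))

/-- `𝕄_{(l,i,j)} = E_{i,j}ᵀ M_l E_{i,j} ∈ S^{n+3m−1}`. -/
noncomputable def bbM {n m : ℕ} (A : Matrix (Fin n) (Fin n) ℝ) (B : Matrix (Fin n) (Fin m) ℝ)
    (C : Matrix (Fin m) (Fin n) ℝ) (D : Matrix (Fin m) (Fin m) ℝ)
    (σ : Fin m → ℝ) (β : Fin m → ℝ≥0∞) (l : Fin m) (i j : Lbl) :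
    Matrix (ColIdx n m) (ColIdx n m) ℝ :=
  (Emat A B C D i j)ᵀ * Mmat σ β l * Emat A B C D i j

/-- `𝕒_{(l,i,j)} = H_{i,j}ᵀ a_l ∈ ℝ^{2m}`. -/
def bba {m : ℕ} (l : Fin m) (i j : Lbl) : TwoM m → ℝ :=
  (Hmat m i j)ᵀ.mulVec (aVec l)

/-- `Σ_∅ = [I, 0, 0, 0; 0, I, 0, 0; 0, 0, 0, N] ∈ ℝ^{(n+2m)×(n+3m−1)}`. -/
def SigO (n m : ℕ) : Matrix (StIdx n m) (ColIdx n m) ℝ :=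
  Matrix.of (Sum.elim (rb4 1 0 0 0) (Sum.elim (rb4 0 1 0 0) (rb4 0 0 0 (Nmat m))))

/-- `Σ_+ = [A, B, 0, −BN; 0, 0, I, 0; 0, 0, 0, N] ∈ ℝ^{(n+2m)×(n+3m−1)}`. -/
def SigP {n m : ℕ} (A : Matrix (Fin n) (Fin n) ℝ) (B : Matrix (Fin n) (Fin m) ℝ) :
    Matrix (StIdx n m) (ColIdx n m) ℝ :=
  Matrix.of (Sum.elim (rb4 A B 0 (-(B * Nmat m)))
    (Sum.elim (rb4 0 0 1 0) (rb4 0 0 0 (Nmat m))))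

/-- The Lagrangian `L(y,u) = Σᵢ fᵢ(yᵢ) + Σᵢ ⟨uᵢ, y_m − yᵢ⟩` of the consensus
formulation, where `y_m` is the last component. -/
noncomputable def Lagr {H : Type*} [NormedAddCommGroup H] [InnerProductSpace ℝ H]
    {m : ℕ} (hm : 0 < m) (f : Fin m → H → ℝ) (y u : Fin m → H) : ℝ :=
  ∑ i, f i (y i) +
    ∑ i, (inner ℝ (u i) (y ⟨m - 1, Nat.sub_lt hm Nat.one_pos⟩ - y i) : ℝ)

/-- The matrix `[C, D, −D; 0, 0, I] ∈ ℝ^{2m×(n+2m)}`. -/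
def Egap {n m : ℕ} (C : Matrix (Fin m) (Fin n) ℝ) (D : Matrix (Fin m) (Fin m) ℝ) :
    Matrix (TwoM m) (StIdx n m) ℝ :=
  Matrix.of (Sum.elim
    (fun i => Sum.elim (C i) (Sum.elim (D i) ((-D) i)))
    (fun i => Sum.elim 0 (Sum.elim 0 (fun j => if i = j then (1 : ℝ) else 0))))

/-- The matrix `[0, −½I; −½I, 0] ∈ S^{2m}`. -/
noncomputable def Wgap (m : ℕ) : Matrix (TwoM m) (TwoM m) ℝ :=
  Matrix.fromBlocks 0 ((-(1 : ℝ) / 2) • 1) ((-(1 : ℝ) / 2) • 1) 0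

/-!
At a consensus fixed point (`y⋆ᵢ` all equal, `∑ u⋆ᵢ = 0`) the duality gap
`L(y, u⋆) − L(y⋆, u)` no longer depends on `u` and equals `∑ᵢ (fᵢ(yᵢ) − fᵢ(y⋆) − ⟨u⋆ᵢ, yᵢ⟩)`;
for an algorithm-consistent point, `y − y⋆ = C(x − x⋆) + Du − Du⋆` turns
`Q(T, (x − x⋆, u, u⋆)) + 𝟏ᵀ(F − F⋆)` into exactly this expression. Summing the descent
`V_{j+1} ≤ V_j − R_j` with `R ≥ Q(T, ·) + 𝟏ᵀ(·)` and `V ≥ 0` bounds the sum of the first `k + 1`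
gaps by `V_0`, and since the gap is convex in `y`, Jensen's inequality transfers the bound to the
ergodic averages.
-/

open scoped InnerProductSpace

section QuadraticForms

variable {H : Type*} [NormedAddCommGroup H] [InnerProductSpace ℝ H]

lemma quadFormH_transpose_mul_mul {ι κ : Type*} [Fintype ι] [Fintype κ]
    (W : Matrix κ κ ℝ) (N : Matrix κ ι ℝ) (z : ι → H) :
    quadFormH (Nᵀ * W * N) z = quadFormH W (matVecH N z) := by
  simp only [quadFormH, matVecH, Matrix.mul_apply, Matrix.transpose_apply, inner_sum,
    sum_inner, real_inner_smul_left, real_inner_smul_right, Finset.mul_sum, Finset.sum_mul]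
  simp_rw [Finset.sum_comm (γ := ι) (α := κ)]
  rw [Finset.sum_comm]
  refine Finset.sum_congr rfl fun a _ => Finset.sum_congr rfl fun b _ => ?_
  rw [Finset.sum_comm]
  refine Finset.sum_congr rfl fun j _ => Finset.sum_congr rfl fun i _ => ?_
  ring

lemma matVecH_sub {p q : Type*} [Fintype q] (M : Matrix p q ℝ) (a b : q → H) :
    matVecH M (a - b) = matVecH M a - matVecH M b := by
  funext i
  simp only [matVecH, Pi.sub_apply, smul_sub, Finset.sum_sub_distrib]

lemma matVecH_Egap_tripleH {n m : ℕ} (C : Matrix (Fin m) (Fin n) ℝ) (D : Matrix (Fin m) (Fin m) ℝ)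
    (w : Fin n → H) (u v : Fin m → H) :
    matVecH (Egap C D) (tripleH w u v) =
      Sum.elim (matVecH C w + matVecH D u - matVecH D v) v := by
  funext i
  cases i with
  | inl i =>
    simp [matVecH, Egap, tripleH, Fintype.sum_sum_type, sub_eq_add_neg, add_assoc,
      Finset.sum_neg_distrib, neg_smul]
  | inr i =>
    simp [matVecH, Egap, tripleH, Fintype.sum_sum_type, Finset.sum_ite_eq]

lemma quadFormH_Wgap {m : ℕ} (v w : Fin m → H) :
    quadFormH (Wgap m) (Sum.elim v w) = -∑ i, ⟪v i, w i⟫_ℝ := by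
  simp only [quadFormH, Wgap, Fintype.sum_sum_type, Sum.elim_inl, Sum.elim_inr,
    fromBlocks_apply₁₁, fromBlocks_apply₁₂, fromBlocks_apply₂₁, fromBlocks_apply₂₂,
    Matrix.zero_apply, Matrix.smul_apply, Matrix.one_apply, smul_eq_mul, mul_ite, mul_one,
    mul_zero, ite_mul, zero_mul, zero_add, add_zero, Finset.sum_ite_eq, Finset.mem_univ,
    if_true, fun i => real_inner_comm (v i) (w i), ← Finset.sum_add_distrib,
    ← Finset.sum_neg_distrib]
  exact Finset.sum_congr rfl fun i _ => by ring

end QuadraticForms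

section Convexity

variable {E : Type*} [NormedAddCommGroup E] [InnerProductSpace ℝ E]

lemma StronglyConvex.convexOn {σ : ℝ} {f : E → ℝ} (hf : StronglyConvex σ f) (hσ : 0 ≤ σ) :
    ConvexOn ℝ Set.univ f :=
  strongConvexOn_zero.1 ((strongConvexOn_iff_convex.2 hf).mono hσ)

lemma ConvexOn.sub_const_sub_inner {f : E → ℝ} (hf : ConvexOn ℝ Set.univ f) (c : ℝ) (v : E) :
    ConvexOn ℝ Set.univ fun z => f z - c - ⟪v, z⟫_ℝ :=
  (hf.sub (concaveOn_const c convex_univ)).sub ((innerₛₗ ℝ v).concaveOn convex_univ)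

end Convexity

section Jensen

variable {ι κ E : Type*} [AddCommGroup E] [Module ℝ E]

lemma ConvexOn.map_finset_average_le {g : E → ℝ} (hg : ConvexOn ℝ Set.univ g) {t : Finset κ}
    (ht : t.Nonempty) (p : κ → E) :
    g ((t.card : ℝ)⁻¹ • ∑ j ∈ t, p j) ≤ (t.card : ℝ)⁻¹ * ∑ j ∈ t, g (p j) := by
  simpa [Finset.centerMass] using hg.map_centerMass_le (t := t) (w := fun _ => 1) (p := p)
    (fun _ _ => zero_le_one) (by simpa using ht) (fun _ _ => Set.mem_univ _)

lemma sum_map_finset_average_le [Fintype ι] {φ : ι → E → ℝ}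
    (hφ : ∀ i, ConvexOn ℝ Set.univ (φ i)) {t : Finset κ} (ht : t.Nonempty) (Y : κ → ι → E) :
    ∑ i, φ i ((t.card : ℝ)⁻¹ • ∑ j ∈ t, Y j i) ≤ (t.card : ℝ)⁻¹ * ∑ j ∈ t, ∑ i, φ i (Y j i) := by
  rw [Finset.sum_comm, Finset.mul_sum]
  exact Finset.sum_le_sum fun i _ => (hφ i).map_finset_average_le ht fun j => Y j i

end Jensen

lemma sum_range_le_sub_of_le_sub {V R : ℕ → ℝ} (h : ∀ j, V (j + 1) ≤ V j - R j) (N : ℕ) :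
    ∑ j ∈ Finset.range N, R j ≤ V 0 - V N := by
  induction N with
  | zero => simp
  | succ N ih => rw [Finset.sum_range_succ]; linarith [h N]

section Lagrangian

variable {H : Type*} [NormedAddCommGroup H] [InnerProductSpace ℝ H]

lemma sum_inner_eq_zero_of_forall_eq {ι : Type*} [Fintype ι] {u y : ι → H}
    (hy : ∀ i j, y i = y j) (hu : ∑ i, u i = 0) : ∑ i, ⟪u i, y i⟫_ℝ = 0 := by
  rcases isEmpty_or_nonempty ι with hι | ⟨⟨i₀⟩⟩
  · simp
  · simp_rw [hy _ i₀, ← sum_inner, hu, inner_zero_left]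

variable {m : ℕ} (hm : 0 < m) (f : Fin m → H → ℝ)

lemma Lagr_eq_of_sum_eq_zero {u : Fin m → H} (hu : ∑ i, u i = 0) (y : Fin m → H) :
    Lagr hm f y u = ∑ i, (f i (y i) - ⟪u i, y i⟫_ℝ) := by
  simp only [Lagr, inner_sub_right, Finset.sum_sub_distrib, ← sum_inner, hu, inner_zero_left]
  ring

lemma Lagr_eq_of_forall_eq {y : Fin m → H} (hy : ∀ i j, y i = y j) (u : Fin m → H) :
    Lagr hm f y u = ∑ i, f i (y i) := by
  have h : ∀ i, y ⟨m - 1, Nat.sub_lt hm Nat.one_pos⟩ - y i = 0 := fun i => sub_eq_zero.2 (hy _ _)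
  simp [Lagr, h]

lemma Lagr_sub_Lagr_eq {y u : Fin m → H} (hy : ∀ i j, y i = y j) (hu : ∑ i, u i = 0)
    (Y U : Fin m → H) :
    Lagr hm f Y u - Lagr hm f y U = ∑ i, (f i (Y i) - f i (y i) - ⟪u i, Y i⟫_ℝ) := by
  rw [Lagr_eq_of_sum_eq_zero hm f hu, Lagr_eq_of_forall_eq hm f hy, ← Finset.sum_sub_distrib]
  exact Finset.sum_congr rfl fun i _ => by ring

end Lagrangian

section Algorithm

variable {H : Type*} [NormedAddCommGroup H] [InnerProductSpace ℝ H] {n m : ℕ}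
  {A : Matrix (Fin n) (Fin n) ℝ} {B : Matrix (Fin n) (Fin m) ℝ}
  {C : Matrix (Fin m) (Fin n) ℝ} {D : Matrix (Fin m) (Fin m) ℝ} {f : Fin m → H → ℝ}
  {x : ℕ → Fin n → H} {u y : ℕ → Fin m → H} {F : ℕ → Fin m → ℝ}
  {xs : Fin n → H} {us ys : Fin m → H} {Fs : Fin m → ℝ}

lemma algConsistent_of_trajectory (h₀ : AlgConsistent C D f (x 0) (u 0) (y 0) (F 0))
    (hsucc : ∀ k, IsSuccessor A B C D f (x k) (u k) (x (k + 1)) (u (k + 1)) (y (k + 1))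
      (F (k + 1))) :
    ∀ k, AlgConsistent C D f (x k) (u k) (y k) (F k)
  | 0 => h₀
  | k + 1 => (hsucc k).2

lemma Vval_Egap_Wgap_eq {x : Fin n → H} {u y : Fin m → H} {F : Fin m → ℝ}
    (h : AlgConsistent C D f x u y F) (hs : AlgConsistent C D f xs us ys Fs)
    (hys : ∀ i j, ys i = ys j) (hus : ∑ i, us i = 0) :
    Vval ((Egap C D)ᵀ * Wgap m * Egap C D) (fun _ => 1) x u F xs us Fs =
      ∑ i, (f i (y i) - f i (ys i) - ⟪us i, y i⟫_ℝ) := by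
  have hy : matVecH C (x - xs) + matVecH D u - matVecH D us = y - ys := by
    rw [h.1, hs.1, matVecH_sub]; abel
  have hcross : ∑ i, ⟪y i - ys i, us i⟫_ℝ = ∑ i, ⟪us i, y i⟫_ℝ := by
    simp_rw [fun i => real_inner_comm (us i) (y i - ys i), inner_sub_right,
      Finset.sum_sub_distrib, sum_inner_eq_zero_of_forall_eq hys hus, sub_zero]
  simp only [Vval, quadFormH_transpose_mul_mul, matVecH_Egap_tripleH, hy, quadFormH_Wgap,
    Pi.sub_apply, hcross, h.2.2, hs.2.2, one_mul, Finset.sum_sub_distrib]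
  ring

variable [CompleteSpace H] {σ : Fin m → ℝ} {β : Fin m → ℝ≥0∞}
  {Q S P T : Matrix (StIdx n m) (StIdx n m) ℝ} {q s p t : Fin m → ℝ}

lemma QuadLyap.sum_range_Vval_le (hL : QuadLyap (H := H) A B C D σ β Q S P T q s p t 1)
    (hf : ∀ i, MemFClass (σ i) (β i) (f i))
    (h₀ : AlgConsistent C D f (x 0) (u 0) (y 0) (F 0))
    (hsucc : ∀ k, IsSuccessor A B C D f (x k) (u k) (x (k + 1)) (u (k + 1)) (y (k + 1))
      (F (k + 1)))
    (hfix : IsFixedPoint A B C D f xs us ys Fs) (N : ℕ) :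
    ∑ j ∈ Finset.range N, Vval T t (x j) (u j) (F j) xs us Fs ≤
      Vval Q q (x 0) (u 0) (F 0) xs us Fs := by
  obtain ⟨hdecrease, hVbound, hRbound⟩ := hL
  have hcons := algConsistent_of_trajectory h₀ hsucc
  have htelescope := sum_range_le_sub_of_le_sub
    (V := fun j => Vval Q q (x j) (u j) (F j) xs us Fs)
    (R := fun j => Vval S s (x j) (u j) (F j) xs us Fs)
    (fun j => by simpa using hdecrease f hf _ _ _ _ (hcons j) _ _ _ _ (hsucc j) _ _ _ _ hfix) N
  obtain ⟨hPV, hP⟩ := hVbound f hf _ _ _ _ (hcons N) _ _ _ _ hfix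
  calc ∑ j ∈ Finset.range N, Vval T t (x j) (u j) (F j) xs us Fs
      ≤ ∑ j ∈ Finset.range N, Vval S s (x j) (u j) (F j) xs us Fs :=
        Finset.sum_le_sum fun j _ => (hRbound f hf _ _ _ _ (hcons j) _ _ _ _ hfix).1
    _ ≤ Vval Q q (x 0) (u 0) (F 0) xs us Fs := by linarith

end Algorithm

theorem quadLyap_duality_gap_general
    {H : Type*} [NormedAddCommGroup H] [InnerProductSpace ℝ H] [CompleteSpace H]
    {n m : ℕ} (hm : 0 < m)
    (A : Matrix (Fin n) (Fin n) ℝ) (B : Matrix (Fin n) (Fin m) ℝ)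
    (C : Matrix (Fin m) (Fin n) ℝ) (D : Matrix (Fin m) (Fin m) ℝ)
    (σ : Fin m → ℝ) (β : Fin m → ℝ≥0∞)
    (hσβ : ∀ i, 0 ≤ σ i ∧ ENNReal.ofReal (σ i) < β i)
    (Q S : Matrix (StIdx n m) (StIdx n m) ℝ) (q s : Fin m → ℝ)
    (hLyap : QuadLyap (H := H) A B C D σ β Q S 0 ((Egap C D)ᵀ * Wgap m * Egap C D)
      q s 0 (fun _ => 1) 1)
    (f : Fin m → H → ℝ) (hf : ∀ i, MemFClass (σ i) (β i) (f i))
    (x : ℕ → Fin n → H) (u y : ℕ → Fin m → H) (F : ℕ → Fin m → ℝ)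
    (htraj0 : AlgConsistent C D f (x 0) (u 0) (y 0) (F 0))
    (htraj : ∀ k : ℕ,
      IsSuccessor A B C D f (x k) (u k) (x (k + 1)) (u (k + 1)) (y (k + 1)) (F (k + 1)))
    (xs : Fin n → H) (us ys : Fin m → H) (Fs : Fin m → ℝ)
    (hfix : IsFixedPoint A B C D f xs us ys Fs)
    (hys : ∀ i j, ys i = ys j) (hus : ∑ i, us i = 0) :
    -- (a) the residual lower bound is the duality gap and is nonnegative
    (∀ k : ℕ,
      Vval ((Egap C D)ᵀ * Wgap m * Egap C D) (fun _ => 1) (x k) (u k) (F k) xs us Fs =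
          Lagr hm f (y k) us - Lagr hm f ys (u k) ∧
      Lagr hm f (y k) us - Lagr hm f ys (u k) =
          ∑ i, (f i (y k i) - f i (ys i) - (inner ℝ (us i) (y k i) : ℝ)) ∧
      0 ≤ Lagr hm f (y k) us - Lagr hm f ys (u k)) ∧
    -- (b) ergodic O(1/k) convergence of the duality gap
    (∀ k : ℕ,
      Lagr hm f (fun i => (1 / (k + 1 : ℝ)) • ∑ j ∈ Finset.range (k + 1), y j i) us -
          Lagr hm f ys (fun i => (1 / (k + 1 : ℝ)) • ∑ j ∈ Finset.range (k + 1), u j i) ≤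
        Vval Q q (x 0) (u 0) (F 0) xs us Fs / (k + 1 : ℝ)) := by
  have hcons := algConsistent_of_trajectory htraj0 htraj
  have hgap : ∀ k, Vval ((Egap C D)ᵀ * Wgap m * Egap C D) (fun _ => 1) (x k) (u k) (F k) xs us Fs =
      ∑ i, (f i (y k i) - f i (ys i) - ⟪us i, y k i⟫_ℝ) :=
    fun k => Vval_Egap_Wgap_eq (hcons k) hfix.2 hys hus
  refine ⟨fun k => ?_, fun k => ?_⟩
  · rw [Lagr_sub_Lagr_eq hm f hys hus, ← hgap k]
    exact ⟨rfl, rfl, (hLyap.2.2 f hf _ _ _ _ (hcons k) _ _ _ _ hfix).2⟩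
  · have hweight : ((k : ℝ) + 1)⁻¹ = ((Finset.range (k + 1)).card : ℝ)⁻¹ := by simp
    rw [Lagr_sub_Lagr_eq hm f hys hus, one_div, div_eq_inv_mul, hweight]
    calc _ ≤ ((Finset.range (k + 1)).card : ℝ)⁻¹ *
          ∑ j ∈ Finset.range (k + 1), ∑ i, (f i (y j i) - f i (ys i) - ⟪us i, y j i⟫_ℝ) :=
          sum_map_finset_average_le
            (fun i => ((hf i).1.convexOn (hσβ i).1).sub_const_sub_inner _ _)
            Finset.nonempty_range_add_one y
      _ ≤ ((Finset.range (k + 1)).card : ℝ)⁻¹ * Vval Q q (x 0) (u 0) (F 0) xs us Fs := by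
          simp_rw [← hgap]
          gcongr
          exact hLyap.sum_range_Vval_le hf htraj0 htraj hfix _

/-- Duality gap convergence from a `(0,0,T,𝟏,1)`-quadratic Lyapunov inequality with
`T = [C,D,−D;0,0,I]ᵀ[0,−½I;−½I,0][C,D,−D;0,0,I]`: along any trajectory the
residual lower bound equals the duality gap, and the ergodic duality gap decays
like `V(ξ_0,ξ⋆)/(k+1)`. -/
theorem quadLyap_duality_gap
    {H : Type*} [NormedAddCommGroup H] [InnerProductSpace ℝ H] [CompleteSpace H]
    {n m : ℕ} (hn : 1 ≤ n) (hm : 0 < m)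
    (A : Matrix (Fin n) (Fin n) ℝ) (B : Matrix (Fin n) (Fin m) ℝ)
    (C : Matrix (Fin m) (Fin n) ℝ) (D : Matrix (Fin m) (Fin m) ℝ)
    (σ : Fin m → ℝ) (β : Fin m → ℝ≥0∞)
    (hσβ : ∀ i, 0 ≤ σ i ∧ ENNReal.ofReal (σ i) < β i)
    (Q S : Matrix (StIdx n m) (StIdx n m) ℝ) (q s : Fin m → ℝ)
    (hLyap : QuadLyap (H := H) A B C D σ β Q S 0 ((Egap C D)ᵀ * Wgap m * Egap C D)
      q s 0 (fun _ => 1) 1)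
    (f : Fin m → H → ℝ) (hf : ∀ i, MemFClass (σ i) (β i) (f i))
    (x : ℕ → Fin n → H) (u y : ℕ → Fin m → H) (F : ℕ → Fin m → ℝ)
    (htraj0 : AlgConsistent C D f (x 0) (u 0) (y 0) (F 0))
    (htraj : ∀ k : ℕ,
      IsSuccessor A B C D f (x k) (u k) (x (k + 1)) (u (k + 1)) (y (k + 1)) (F (k + 1)))
    (xs : Fin n → H) (us ys : Fin m → H) (Fs : Fin m → ℝ)
    (hfix : IsFixedPoint A B C D f xs us ys Fs)
    (hys : ∀ i j, ys i = ys j) (hus : ∑ i, us i = 0) :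
    -- (a) the residual lower bound is the duality gap and is nonnegative
    (∀ k : ℕ,
      Vval ((Egap C D)ᵀ * Wgap m * Egap C D) (fun _ => 1) (x k) (u k) (F k) xs us Fs =
          Lagr hm f (y k) us - Lagr hm f ys (u k) ∧
      Lagr hm f (y k) us - Lagr hm f ys (u k) =
          ∑ i, (f i (y k i) - f i (ys i) - (inner ℝ (us i) (y k i) : ℝ)) ∧
      0 ≤ Lagr hm f (y k) us - Lagr hm f ys (u k)) ∧
    -- (b) ergodic O(1/k) convergence of the duality gap
    (∀ k : ℕ,
      Lagr hm f (fun i => (1 / (k + 1 : ℝ)) • ∑ j ∈ Finset.range (k + 1), y j i) us -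
          Lagr hm f ys (fun i => (1 / (k + 1 : ℝ)) • ∑ j ∈ Finset.range (k + 1), u j i) ≤
        Vval Q q (x 0) (u 0) (F 0) xs us Fs / (k + 1 : ℝ)) :=
  quadLyap_duality_gap_general hm A B C D σ β hσβ Q S q s hLyap f hf x u y F htraj0 htraj xs us ys
    Fs hfix hys hus
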